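/- arXiv:math/0110333 — 2 statements merged into one kernel-verified Lean document; each statement's English description precedes it below -/
import Mathlib

section
/- Define T_{n,k} = 2^{n-2k+1} * C(n-1, 2k-2) * S_{k-1} for 1 ≤ k ≤ floor((n+1)/2). Then for all n ≥ 1, the weighted sum equals the total count: sum over k from 1 to floor((n+1)/2) of k * T_{n,k} = n * S_{n-1}. -/
/-- The n-th Catalan number S_n = (1/(n+1)) * C(2n, n). -/
def S (n : ℕ) : ℕ := Nat.choose (2 * n) n / (n + 1)

/-- T_{n,k} = 2^{n-2k+1} * C(n-1, 2k-2) * S_{k-1}. -/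
def T (n k : ℕ) : ℕ := 2 ^ (n + 1 - 2 * k) * Nat.choose (n - 1) (2 * k - 2) * S (k - 1)

open Polynomial Finset

lemma coeff_one_add_X_sq_pow (i k : ℕ) :
    ((1 + X ^ 2 : ℕ[X]) ^ i).coeff k = if 2 ∣ k then i.choose (k / 2) else 0 := by
  rw [add_pow]
  simp only [one_pow, one_mul, ← pow_mul, finset_sum_coeff, coeff_mul_natCast, coeff_X_pow,
    Nat.cast_id, ite_mul, zero_mul, one_mul]
  rw [Finset.sum_eq_single (i - k / 2)]
  · split_ifs with h1 h2 h2
    · have hk : k / 2 ≤ i := by omega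
      exact Nat.choose_symm hk
    · omega
    · exact (Nat.choose_eq_zero_of_lt (by omega : i < k / 2)).symm
    · rfl
  · intro b hb hne
    rw [if_neg]
    simp only [Finset.mem_range] at hb
    omega
  · intro h
    exact absurd (Finset.mem_range.mpr (by omega)) h

lemma key (m : ℕ) :
    ∑ i ∈ Finset.range (m+1),
      (if 2 ∣ i then i.choose (i/2) else 0) * (2^(m-i) * m.choose i) = (2*m).choose m := by
  have h1 : ((1+X:ℕ[X])^(2*m)).coeff m = (2*m).choose m := by
    rw [coeff_one_add_X_pow]; exact Nat.cast_id _
  have h2 : ((1+X:ℕ[X])^(2*m)) = ((1 + X^2) + 2*X)^m := by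
    have h : (1+X:ℕ[X])^2 = (1+X^2)+2*X := by ring
    rw [pow_mul, h]
  rw [← h1, h2, add_pow, finset_sum_coeff]
  apply Finset.sum_congr rfl
  intro i hi
  have him : i ≤ m := Nat.lt_succ_iff.mp (Finset.mem_range.mp hi)
  rw [mul_pow, coeff_mul_natCast,
    show (1+X^2:ℕ[X])^i * ((2:ℕ[X])^(m-i) * X^(m-i))
      = ((2^(m-i) : ℕ) : ℕ[X]) * ((1+X^2)^i * X^(m-i)) by push_cast; ring,
    coeff_natCast_mul, coeff_mul_X_pow', if_pos (Nat.sub_le m i),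
    show m - (m - i) = i by omega, coeff_one_add_X_sq_pow]
  simp only [Nat.cast_id]
  ring

lemma key2 (m : ℕ) :
    ∑ j ∈ Finset.range (m/2+1), 2^(m-2*j) * (m.choose (2*j) * (2*j).choose j)
      = (2*m).choose m := by
  rw [← key m]
  conv_rhs => rw [show (fun i => (if 2 ∣ i then i.choose (i/2) else 0) * (2^(m-i) * m.choose i)) = fun i => (if 2 ∣ i then i.choose (i/2) * (2^(m-i) * m.choose i) else 0) from funext fun i => by split <;> simp]
  rw [← Finset.sum_filter]
  refine Finset.sum_nbij' (fun j => 2*j) (fun i => i/2) ?_ ?_ ?_ ?_ ?_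
  · intro j hj
    simp only [Finset.mem_filter, Finset.mem_range] at *
    omega
  · intro i hi
    simp only [Finset.mem_filter, Finset.mem_range] at *
    omega
  · intro j _
    show 2 * j / 2 = j
    omega
  · intro i hi
    simp only [Finset.mem_filter, Finset.mem_range] at hi
    show 2 * (i / 2) = i
    omega
  · intro j hj
    rw [show 2*j/2 = j by omega]
    ring

theorem weighted_multiplicity_sum (n : ℕ) (hn : 1 ≤ n) :
    ∑ k ∈ Finset.Icc 1 ((n + 1) / 2), k * T n k = n * S (n - 1) := by
  obtain ⟨m, rfl⟩ : ∃ m, n = m + 1 := ⟨n - 1, by omega⟩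
  have hS : ∀ j, S j = catalan j := fun j => (catalan_eq_centralBinom_div j).symm
  have hrhs : (m + 1) * S (m + 1 - 1) = (2 * m).choose m := by
    rw [show m + 1 - 1 = m from rfl, hS, succ_mul_catalan_eq_centralBinom]
    rfl
  rw [hrhs, ← key2 m]
  refine Finset.sum_nbij' (fun k => k - 1) (fun j => j + 1) ?_ ?_ ?_ ?_ ?_
  · intro k hk
    simp only [Finset.mem_Icc, Finset.mem_range] at *
    omega
  · intro j hj
    simp only [Finset.mem_Icc, Finset.mem_range] at *
    omega
  · intro k hk
    simp only [Finset.mem_Icc] at hk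
    show k - 1 + 1 = k
    omega
  · intro j _
    show j + 1 - 1 = j
    omega
  · intro k hk
    simp only [Finset.mem_Icc] at hk
    obtain ⟨j, rfl⟩ : ∃ j, k = j + 1 := ⟨k - 1, by omega⟩
    show (j+1) * T (m+1) (j+1) = 2 ^ (m - 2 * (j+1-1)) * ((m.choose (2 * (j+1-1))) * ((2 * (j+1-1)).choose (j+1-1)))
    rw [show j + 1 - 1 = j from rfl]
    unfold T
    rw [show m + 1 + 1 - 2 * (j + 1) = m - 2 * j by omega,
      show 2 * (j + 1) - 2 = 2 * j from by omega,
      show m + 1 - 1 = m from rfl, show j + 1 - 1 = j from rfl, hS j]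
    rw [show (j+1) * (2 ^ (m - 2*j) * m.choose (2*j) * catalan j)
        = 2 ^ (m - 2*j) * (m.choose (2*j) * ((j+1) * catalan j)) by ring,
      succ_mul_catalan_eq_centralBinom]
    rfl
end

section
/- Define T_{n,k} = 2^{n-2k+1} * C(n-1, 2k-2) * S_{k-1}. Then for all n ≥ 1 and all k with 1 ≤ k ≤ floor((n+1)/2), the identity sum over ν from 0 to floor((n+1)/2) - k of C(k+ν, k) * T_{n, k+ν} = C(n-k+1, k) * S_{n-k} holds. -/
/-!
The summand `F n ν = C(k + ν, k) * T n (k + ν)` is hypergeometric in both `n` and `ν`, and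
Zeilberger's algorithm finds the certificate `G n ν = 4 (k + ν - 1) ν F (n + 1) ν` with
`n (n + 2 - 2k) F (n + 1) ν - 2n (2n + 1 - 2k) F n ν = G n ν - G n (ν + 1)`;
it reduces to the two ratio recurrences of `T`, in its first and in its second argument.
Summing over `ν` telescopes, so the weighted sums satisfy a first order recurrence in `n`,
which the closed form `C(n - k + 1, k) S (n - k)` satisfies as well. Induction on `n` starts at
`n = 2k - 1`, where the sum has the single term `T (2k - 1) k = S (k - 1)`.
-/

open Finset

lemma S_eq_catalan (n : ℕ) : S n = catalan n := by
  rw [catalan_eq_centralBinom_div, Nat.centralBinom_eq_two_mul_choose]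
  rfl

lemma succ_succ_mul_S_succ (n : ℕ) : (n + 2) * S (n + 1) = 2 * (2 * n + 1) * S n := by
  simp only [S_eq_catalan]
  refine Nat.eq_of_mul_eq_mul_left n.succ_pos ?_
  calc (n + 1) * ((n + 2) * catalan (n + 1)) = (n + 1) * (n + 1).centralBinom := by
        rw [← succ_mul_catalan_eq_centralBinom]
    _ = 2 * (2 * n + 1) * n.centralBinom := Nat.succ_mul_centralBinom_succ n
    _ = (n + 1) * (2 * (2 * n + 1) * catalan n) := by
        rw [← succ_mul_catalan_eq_centralBinom]; ring

lemma sub_mul_choose_mul_S_succ (p k : ℕ) :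
    (p + 2 - k) * ((p + 2).choose k * S (p + 1)) = 2 * (2 * p + 1) * ((p + 1).choose k * S p) := by
  rw [← mul_assoc, mul_comm (p + 2 - k), ← Nat.choose_mul_succ_eq, mul_assoc,
    succ_succ_mul_S_succ]
  ring

/- Since `n - 1` truncates, `T 0 1 = 1`: vanishing is phrased through `n - 1`, and
`T_succ_right` (false at first argument `0`) is stated at `n + 1`. -/
lemma T_eq_zero {n j : ℕ} (h : n - 1 < 2 * j - 2) : T n j = 0 := by
  rw [T, Nat.choose_eq_zero_of_lt h, mul_zero, zero_mul]

lemma T_two_mul_add_one_add (i e : ℕ) :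
    T (2 * i + 1 + e) (i + 1) = 2 ^ e * (2 * i + e).choose (2 * i) * S i := by
  rw [T, show 2 * i + 1 + e + 1 - 2 * (i + 1) = e by omega,
    show 2 * i + 1 + e - 1 = 2 * i + e by omega, show 2 * (i + 1) - 2 = 2 * i by omega,
    Nat.add_sub_cancel]

lemma T_succ_left (n : ℕ) {j : ℕ} (hj : 1 ≤ j) :
    ((n : ℤ) + 2 - 2 * j) * T (n + 1) j = 2 * n * T n j := by
  obtain ⟨i, rfl⟩ : ∃ i, j = i + 1 := ⟨j - 1, by omega⟩
  obtain h | rfl | ⟨e, rfl⟩ : n < 2 * i ∨ n = 2 * i ∨ ∃ e, n = 2 * i + 1 + e := by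
    rcases Nat.lt_or_ge n (2 * i + 1) with h | h
    · omega
    · exact .inr (.inr (Nat.exists_eq_add_of_le h))
  · rw [T_eq_zero (by omega), T_eq_zero (by omega)]
    simp
  · rcases Nat.eq_zero_or_pos i with rfl | hi
    · simp
    · rw [T_eq_zero (n := 2 * i) (by omega)]
      push_cast
      ring
  · have hc := Nat.choose_mul_succ_eq (2 * i + e) (2 * i)
    rw [show 2 * i + e + 1 - 2 * i = e + 1 by omega] at hc
    rw [show 2 * i + 1 + e + 1 = 2 * i + 1 + (e + 1) by ring, T_two_mul_add_one_add,
      T_two_mul_add_one_add, ← add_assoc]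
    zify at hc
    push_cast
    linear_combination (-2 * 2 ^ e * (S i : ℤ)) * hc

lemma T_succ_right (n : ℕ) {j : ℕ} (hj : 1 ≤ j) :
    4 * (j : ℤ) * (j + 1) * T (n + 1) (j + 1)
      = ((n : ℤ) + 2 - 2 * j) * (n + 1 - 2 * j) * T (n + 1) j := by
  obtain ⟨i, rfl⟩ : ∃ i, j = i + 1 := ⟨j - 1, by omega⟩
  obtain h | rfl | rfl | ⟨e, rfl⟩ :
      n < 2 * i ∨ n = 2 * i ∨ n = 2 * i + 1 ∨ ∃ e, n = 2 * i + 2 + e := by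
    rcases Nat.lt_or_ge n (2 * i + 2) with h | h
    · omega
    · exact .inr (.inr (.inr (Nat.exists_eq_add_of_le h)))
  · rw [T_eq_zero (by omega), T_eq_zero (by omega)]
    simp
  · rw [T_eq_zero (by omega)]
    push_cast
    ring
  · rw [T_eq_zero (by omega)]
    push_cast
    ring
  · have hS := succ_succ_mul_S_succ i
    have hc₁ := Nat.choose_succ_right_eq (2 * i + 2 + e) (2 * i)
    have hc₂ := Nat.choose_succ_right_eq (2 * i + 2 + e) (2 * i + 1)
    rw [show 2 * i + 2 + e - 2 * i = e + 2 by omega] at hc₁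
    rw [show 2 * i + 2 + e - (2 * i + 1) = e + 1 by omega] at hc₂
    rw [show 2 * i + 2 + e + 1 = 2 * (i + 1) + 1 + e by ring, T_two_mul_add_one_add,
      show 2 * (i + 1) + 1 + e = 2 * i + 1 + (e + 2) by ring, T_two_mul_add_one_add,
      show 2 * (i + 1) = 2 * i + 1 + 1 by ring, show 2 * i + (e + 2) = 2 * i + 2 + e by ring]
    zify at hS hc₁ hc₂
    push_cast
    linear_combination
      4 * (i + 1) * 2 ^ e * ((2 * i + 2 + e).choose (2 * i + 1 + 1) : ℤ) * hS
        + 4 * 2 ^ e * (2 * i + 1) * (S i : ℤ) * hc₂ + 4 * 2 ^ e * (e + 1) * (S i : ℤ) * hc₁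

lemma choose_mul_T_telescoping (n : ℕ) {k : ℕ} (hk : 1 ≤ k) (ν : ℕ) :
    (n : ℤ) * (n + 2 - 2 * k) * ((k + ν).choose k * T (n + 1) (k + ν))
      + 4 * ((k : ℤ) + ν) * (ν + 1) * ((k + ν + 1).choose k * T (n + 1) (k + ν + 1))
    = 2 * (n : ℤ) * (2 * n + 1 - 2 * k) * ((k + ν).choose k * T n (k + ν))
      + 4 * ((k : ℤ) + ν - 1) * ν * ((k + ν).choose k * T (n + 1) (k + ν)) := by
  have hc := Nat.choose_mul_succ_eq (k + ν) k
  rw [show k + ν + 1 - k = ν + 1 by omega] at hc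
  have hrow := T_succ_left n (j := k + ν) (by omega)
  have hcol := T_succ_right n (j := k + ν) (by omega)
  zify at hc
  push_cast at hrow hcol ⊢
  linear_combination (-4 * ((k : ℤ) + ν) * T (n + 1) (k + ν + 1)) * hc
    + ((k + ν).choose k : ℤ) * hcol + (2 * n + 1 - 2 * k) * ((k + ν).choose k : ℤ) * hrow

lemma sum_choose_mul_T_succ (n : ℕ) {k N : ℕ} (hk : 1 ≤ k) (hN : T (n + 1) (k + N) = 0) :
    (n : ℤ) * (n + 2 - 2 * k) * ((∑ ν ∈ range N, (k + ν).choose k * T (n + 1) (k + ν) : ℕ) : ℤ)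
      = 2 * n * (2 * n + 1 - 2 * k)
        * ((∑ ν ∈ range N, (k + ν).choose k * T n (k + ν) : ℕ) : ℤ) := by
  set G : ℕ → ℤ := fun ν ↦ 4 * ((k : ℤ) + ν - 1) * ν * ((k + ν).choose k * T (n + 1) (k + ν))
  have htel : ∑ ν ∈ range N, (G ν - G (ν + 1)) = 0 := by
    rw [sum_range_sub']
    simp [G, hN]
  push_cast
  rw [mul_sum, mul_sum, ← sub_eq_zero, ← sum_sub_distrib, ← htel]
  refine sum_congr rfl fun ν _ ↦ ?_
  simp only [G]
  push_cast
  linear_combination choose_mul_T_telescoping n hk ν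

lemma sum_range_choose_mul_T_eq (n : ℕ) {k N : ℕ} (hk : 1 ≤ k) (hN : (n + 1) / 2 - k < N) :
    ∑ ν ∈ range N, (k + ν).choose k * T n (k + ν)
      = ∑ ν ∈ range ((n + 1) / 2 - k + 1), (k + ν).choose k * T n (k + ν) := by
  refine (sum_subset (range_subset_range.2 hN) fun ν _ hν ↦ ?_).symm
  rw [mem_range] at hν
  rw [T_eq_zero (by omega), mul_zero]

theorem binomial_weighted_T_sum_general (n k : ℕ) (hk1 : 1 ≤ k)
    (hk2 : k ≤ (n + 1) / 2) :
    ∑ ν ∈ Finset.range ((n + 1) / 2 - k + 1), Nat.choose (k + ν) k * T n (k + ν)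
      = Nat.choose (n - k + 1) k * S (n - k) := by
  have hn : 2 * k - 1 ≤ n := by omega
  clear hk2
  induction n, hn using Nat.le_induction with
  | base =>
    rw [show (2 * k - 1 + 1) / 2 - k + 1 = 1 by omega, sum_range_one, add_zero,
      show 2 * k - 1 - k + 1 = k by omega, T, show 2 * k - 1 + 1 - 2 * k = 0 by omega,
      show 2 * k - 1 - 1 = 2 * k - 2 by omega, show 2 * k - 1 - k = k - 1 by omega]
    simp
  | succ n hn ih =>
    have hrec := sum_choose_mul_T_succ n (N := n + 2) hk1 (T_eq_zero (by omega))
    rw [sum_range_choose_mul_T_eq n hk1 (by omega), ih,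
      sum_range_choose_mul_T_eq (n + 1) hk1 (by omega)] at hrec
    have hR := sub_mul_choose_mul_S_succ (n - k) k
    rw [show n - k + 2 - k = n + 2 - 2 * k by omega,
      show 2 * (n - k) + 1 = 2 * n + 1 - 2 * k by omega] at hR
    rw [show n + 1 - k + 1 = n - k + 2 by omega, show n + 1 - k = n - k + 1 by omega]
    refine Nat.eq_of_mul_eq_mul_left
      (Nat.mul_pos (by omega : 0 < n) (by omega : 0 < n + 2 - 2 * k)) ?_
    zify [show 2 * k ≤ n + 2 by omega, show 2 * k ≤ 2 * n + 1 by omega] at hR hrec ⊢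
    linear_combination hrec - n * hR

theorem binomial_weighted_T_sum (n k : ℕ) (hn : 1 ≤ n) (hk1 : 1 ≤ k)
    (hk2 : k ≤ (n + 1) / 2) :
    ∑ ν ∈ Finset.range ((n + 1) / 2 - k + 1), Nat.choose (k + ν) k * T n (k + ν)
      = Nat.choose (n - k + 1) k * S (n - k) :=
  binomial_weighted_T_sum_general n k hk1 hk2
end
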